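/- Let θ : ℕ → ℝ^p satisfy Σ_{j=t̄}^{t̄+mN̄−1} ‖θ(j+1)−θ(j)‖ ≤ c₀ + ε m N̄, let f have bounded gain ν, and partition [t̄, t̄+mN̄) into N̄ consecutive intervals of length m. Call an interval [t̄+im, t̄+(i+1)m) 'bad' if there exists t in it with ‖(θ(t) − θ(t̄+im))ᵀ f(φ(t))‖ > δ ‖φ(t)‖ for some fixed δ > 0 and some sequence φ with φ(t) ≠ 0. Then the number N₁ of bad intervals satisfies N₁ ≤ (ν/δ)(c₀ + ε m N̄). -/

import Mathlib

open Finset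
open scoped Classical

theorem stmt9 (p q : ℕ)
    (θ : ℕ → EuclideanSpace ℝ (Fin p))
    (f : EuclideanSpace ℝ (Fin q) → EuclideanSpace ℝ (Fin p))
    (φ : ℕ → EuclideanSpace ℝ (Fin q))
    (ν δ c₀ ε : ℝ) (hν : 0 < ν) (hδ : 0 < δ) (hc₀ : 0 ≤ c₀) (hε : 0 ≤ ε)
    (tb m Nbar : ℕ) (hm : 1 ≤ m)
    (hf : ∀ x, ‖f x‖ ≤ ν * ‖x‖)
    (hvar : ∑ j ∈ Ico tb (tb + m * Nbar), ‖θ (j + 1) - θ j‖ ≤ c₀ + ε * m * Nbar) :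
    (((range Nbar).filter (fun i =>
        ∃ t ∈ Ico (tb + i * m) (tb + (i + 1) * m),
          φ t ≠ 0 ∧
          ‖(inner ℝ (θ t - θ (tb + i * m)) (f (φ t)) : ℝ)‖ > δ * ‖φ t‖)).card : ℝ)
      ≤ (ν / δ) * (c₀ + ε * m * Nbar) := by
  set g : ℕ → ℝ := fun j => ‖θ (j + 1) - θ j‖ with hg
  have hg0 : ∀ j, 0 ≤ g j := fun j => norm_nonneg _
  set S := (range Nbar).filter (fun i =>
        ∃ t ∈ Ico (tb + i * m) (tb + (i + 1) * m),
          φ t ≠ 0 ∧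
          ‖(inner ℝ (θ t - θ (tb + i * m)) (f (φ t)) : ℝ)‖ > δ * ‖φ t‖) with hS
  -- block sums partition the total sum
  have hblock : ∀ N : ℕ, ∑ i ∈ range N, ∑ j ∈ Ico (tb + i * m) (tb + (i + 1) * m), g j
      = ∑ j ∈ Ico tb (tb + m * N), g j := by
    intro N
    induction N with
    | zero => simp
    | succ n ih =>
      rw [Finset.sum_range_succ, ih,
        show tb + m * (n + 1) = tb + (n + 1) * m by ring,
        show tb + m * n = tb + n * m by ring]
      exact Finset.sum_Ico_consecutive _ (by nlinarith) (by nlinarith)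
  -- per bad interval lower bound
  have key : ∀ i ∈ S, δ / ν ≤ ∑ j ∈ Ico (tb + i * m) (tb + (i + 1) * m), g j := by
    intro i hi
    simp only [hS, Finset.mem_filter] at hi
    obtain ⟨-, t, ht, hφ, hbig⟩ := hi
    rw [Finset.mem_Ico] at ht
    set s := tb + i * m with hs
    -- norm of θ t - θ s bounded by block sum
    have htel : θ t - θ s = ∑ j ∈ Ico s t, (θ (j + 1) - θ j) := by
      rw [Finset.sum_Ico_eq_sub _ ht.1]
      rw [Finset.sum_range_sub (fun k => θ k), Finset.sum_range_sub (fun k => θ k)]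
      abel
    have hnorm : ‖θ t - θ s‖ ≤ ∑ j ∈ Ico s t, g j := by
      rw [htel]; exact norm_sum_le _ _
    have hsub : ∑ j ∈ Ico s t, g j ≤ ∑ j ∈ Ico s (tb + (i + 1) * m), g j := by
      apply Finset.sum_le_sum_of_subset_of_nonneg
      · exact Finset.Ico_subset_Ico le_rfl (le_of_lt ht.2)
      · intro j _ _; exact hg0 j
    -- inner product bound
    have hin : ‖(inner ℝ (θ t - θ s) (f (φ t)) : ℝ)‖ ≤ ‖θ t - θ s‖ * (ν * ‖φ t‖) := by
      calc ‖(inner ℝ (θ t - θ s) (f (φ t)) : ℝ)‖ ≤ ‖θ t - θ s‖ * ‖f (φ t)‖ :=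
            norm_inner_le_norm _ _
        _ ≤ ‖θ t - θ s‖ * (ν * ‖φ t‖) := by
            exact mul_le_mul_of_nonneg_left (hf _) (norm_nonneg _)
    have hφpos : 0 < ‖φ t‖ := norm_pos_iff.mpr hφ
    have hδν : δ / ν < ‖θ t - θ s‖ := by
      rw [div_lt_iff₀ hν]
      nlinarith [lt_of_lt_of_le hbig hin]
    linarith [le_trans hnorm hsub]
  have h1 : (S.card : ℝ) * (δ / ν) ≤
      ∑ i ∈ S, ∑ j ∈ Ico (tb + i * m) (tb + (i + 1) * m), g j := by
    calc (S.card : ℝ) * (δ / ν) = ∑ _i ∈ S, δ / ν := by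
          rw [Finset.sum_const, nsmul_eq_mul]
      _ ≤ _ := Finset.sum_le_sum key
  have h2 : ∑ i ∈ S, ∑ j ∈ Ico (tb + i * m) (tb + (i + 1) * m), g j
      ≤ ∑ i ∈ range Nbar, ∑ j ∈ Ico (tb + i * m) (tb + (i + 1) * m), g j := by
    apply Finset.sum_le_sum_of_subset_of_nonneg
    · intro x hx
      simp only [hS, Finset.mem_filter] at hx
      exact hx.1
    intro i _ _
    exact Finset.sum_nonneg fun j _ => hg0 j
  have h3 : (S.card : ℝ) * (δ / ν) ≤ c₀ + ε * m * Nbar := by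
    calc (S.card : ℝ) * (δ / ν) ≤ _ := h1
      _ ≤ _ := h2
      _ = ∑ j ∈ Ico tb (tb + m * Nbar), g j := hblock Nbar
      _ ≤ c₀ + ε * m * Nbar := hvar
  rw [div_mul_eq_mul_div, le_div_iff₀ hδ]
  have hδν' : (0:ℝ) < δ / ν := div_pos hδ hν
  have hcard : (0:ℝ) ≤ (S.card : ℝ) := Nat.cast_nonneg _
  have := mul_le_mul_of_nonneg_right h3 (le_of_lt hν)
  rw [mul_assoc, div_mul_cancel₀ _ (ne_of_gt hν)] at this
  linarith
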